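/- Let R be a ring such that the clique number of the unit graph G(R) is finite and 2 is a unit of R. Then the Jacobson radical J(R) is a nilpotent ideal, i.e., there exists a natural number n with (J(R))^n = 0. -/

import Mathlib

/-- The unit graph of a ring `R`: vertices are elements of `R`, and two distinct
vertices `a` and `b` are adjacent iff `a + b` is a unit of `R`. -/
def unitGraph (R : Type*) [Ring R] : SimpleGraph R where
  Adj a b := a ≠ b ∧ IsUnit (a + b)
  symm := ⟨fun a b ⟨h1, h2⟩ => ⟨h1.symm, add_comm a b ▸ h2⟩⟩
  loopless := ⟨fun _ ⟨h, _⟩ => h rfl⟩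

/-- The clique number of a graph, valued in `ℕ∞` to allow infinite cliques. -/
noncomputable def ecliqueNum {V : Type*} (G : SimpleGraph V) : ℕ∞ :=
  ⨆ s ∈ {s : Set V | G.IsClique s}, s.encard

/-- The independence number of a graph, valued in `ℕ∞`. -/
noncomputable def eindepNum {V : Type*} (G : SimpleGraph V) : ℕ∞ :=
  ⨆ s ∈ {s : Set V | s.Pairwise fun a b => ¬ G.Adj a b}, s.encard

/-- The Jacobson radical of a (not necessarily commutative) ring, as a two-sided ideal:
the intersection of all maximal left ideals. -/
noncomputable def ringJacobson (R : Type*) [Ring R] : TwoSidedIdeal R :=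
  (⊥ : TwoSidedIdeal R).jacobson

/-- The quotient of `R` by its Jacobson radical. -/
abbrev modJacobson (R : Type*) [Ring R] := (ringJacobson R).ringCon.Quotient

/-!
The shifted radical `1 + J(R)` is a clique of the unit graph, since
`(1 + x) + (1 + y) = 2 (1 + (x + y) / 2)` is a unit when `2` is one and `1 + J(R)` consists
of units. Hence `J(R)` is finite. The powers `J(R)^(k+1)` are then finitely many subsets of
`J(R)`, so the decreasing chain stabilises at some `J(R)^(k+1) = J(R) • J(R)^(k+1)`, and this
finitely generated left ideal vanishes by Nakayama's lemma.
-/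

theorem Antitone.exists_succ_eq_of_finite_range {α : Type*} [PartialOrder α] {f : ℕ → α}
    (hf : Antitone f) (hfin : (Set.range f).Finite) : ∃ n, f (n + 1) = f n := by
  by_contra! hne
  exact Set.infinite_range_of_injective
    (strictAnti_nat_of_succ_lt fun n => (hf n.le_succ).lt_of_ne (hne n)).injective hfin

namespace Ideal

variable {R : Type*} [Ring R]

theorem list_prod_ofFn_mem_pow {I : Ideal R} {n : ℕ} {f : Fin n → R} (hf : ∀ i, f i ∈ I) :
    (List.ofFn f).prod ∈ I ^ n := by
  induction n with
  | zero => simp [Submodule.pow_zero, one_eq_top]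
  | succ n ih =>
    rw [List.ofFn_succ', List.prod_concat, Submodule.pow_succ]
    exact mul_mem_mul (ih fun i => hf _) (hf _)

theorem isNilpotent_of_finite_of_le_jacobson {I : Ideal R} [I.IsTwoSided]
    (hI : (I : Set R).Finite) (hIJ : I ≤ Ring.jacobson R) : IsNilpotent I := by
  have hsub : ∀ n, ((I ^ (n + 1) : Ideal R) : Set R) ⊆ I := fun n =>
    pow_le_self n.succ_ne_zero
  have hfin : (Set.range fun n => I ^ (n + 1)).Finite :=
    (hI.finite_subsets.preimage SetLike.coe_injective.injOn).subset
      (Set.range_subset_iff.2 hsub)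
  have hanti : Antitone fun n => I ^ (n + 1) := fun _ _ h => pow_le_pow_right (by omega)
  obtain ⟨n, hn⟩ := hanti.exists_succ_eq_of_finite_range hfin
  have hfg : (I ^ (n + 1)).FG := Submodule.fg_def.2 ⟨_, hI.subset (hsub n), Submodule.span_eq _⟩
  refine ⟨n + 1, Submodule.FG.eq_bot_of_le_jacobson_smul hfg ?_⟩
  calc I ^ (n + 1) = I * I ^ (n + 1) := by rw [← IsTwoSided.pow_succ, hn]
    _ = I • I ^ (n + 1) := (smul_eq_mul _ _).symm
    _ ≤ Ring.jacobson R • I ^ (n + 1) := Submodule.smul_mono_left hIJ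

end Ideal

namespace Ring

variable {R : Type*} [Ring R]

theorem exists_mul_one_add_eq_one_of_mem_jacobson {j : R} (hj : j ∈ jacobson R) :
    ∃ z, z * (1 + j) = 1 := by
  rw [← Ideal.jacobson_bot, Ideal.mem_jacobson_iff] at hj
  obtain ⟨z, hz⟩ := hj 1
  exact ⟨z, by simpa [mul_add, add_comm, sub_eq_zero] using hz⟩

theorem isUnit_one_add_of_mem_jacobson {j : R} (hj : j ∈ jacobson R) : IsUnit (1 + j) := by
  obtain ⟨z, hz⟩ := exists_mul_one_add_eq_one_of_mem_jacobson hj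
  -- `z = 1 - z * j` has a left inverse too, which is forced to be `1 + j`.
  have hz' : z = 1 + -(z * j) := by rw [← hz]; noncomm_ring
  obtain ⟨w, hw⟩ :=
    exists_mul_one_add_eq_one_of_mem_jacobson (neg_mem (Ideal.mul_mem_left _ z hj))
  rw [← hz'] at hw
  have hw' : w = 1 + j := by
    calc w = w * (z * (1 + j)) := by rw [hz, mul_one]
      _ = 1 + j := by rw [← mul_assoc, hw, one_mul]
  exact ⟨⟨1 + j, z, hw' ▸ hw, hz⟩, rfl⟩

end Ring

theorem mem_ringJacobson_iff {R : Type*} [Ring R] {x : R} :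
    x ∈ ringJacobson R ↔ x ∈ Ring.jacobson R := by
  simp [ringJacobson, TwoSidedIdeal.jacobson, Ideal.jacobson_bot]

section UnitGraph

theorem encard_le_ecliqueNum {V : Type*} {G : SimpleGraph V} {s : Set V} (hs : G.IsClique s) :
    s.encard ≤ ecliqueNum G :=
  le_iSup₂ (f := fun (t : Set V) (_ : t ∈ {t : Set V | G.IsClique t}) => t.encard) s hs

theorem finite_of_isClique_of_ecliqueNum_ne_top {V : Type*} {G : SimpleGraph V} {s : Set V}
    (hG : ecliqueNum G ≠ ⊤) (hs : G.IsClique s) : s.Finite :=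
  Set.encard_ne_top_iff.1 (ne_top_of_le_ne_top hG (encard_le_ecliqueNum hs))

variable {R : Type*} [Ring R]

theorem isClique_unitGraph_one_add_jacobson (h2 : IsUnit (2 : R)) :
    (unitGraph R).IsClique ((1 + ·) '' (Ring.jacobson R : Set R)) := by
  rintro _ ⟨x, hx, rfl⟩ _ ⟨y, hy, rfl⟩ hne
  refine ⟨hne, ?_⟩
  obtain ⟨u, hu⟩ := h2
  have hsum : (1 + x) + (1 + y) = u * (1 + ↑u⁻¹ * (x + y)) := by
    rw [mul_add, mul_one, ← mul_assoc, u.mul_inv, one_mul, hu, ← one_add_one_eq_two]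
    abel
  rw [hsum]
  exact u.isUnit.mul (Ring.isUnit_one_add_of_mem_jacobson
    (Ideal.mul_mem_left _ _ (add_mem hx hy)))

theorem finite_jacobson_of_ecliqueNum_ne_top (hclique : ecliqueNum (unitGraph R) ≠ ⊤)
    (h2 : IsUnit (2 : R)) : (Ring.jacobson R : Set R).Finite :=
  Set.Finite.of_finite_image
    (finite_of_isClique_of_ecliqueNum_ne_top hclique (isClique_unitGraph_one_add_jacobson h2))
    (add_right_injective 1).injOn

end UnitGraph

/-- If the unit graph of `R` has finite clique number and `2` is a unit of `R`,
then the Jacobson radical of `R` is nilpotent: there is an `n : ℕ` with `J(R)^n = 0`,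
i.e. every product of `n` elements of `J(R)` vanishes. -/
theorem jacobson_nilpotent_of_ecliqueNum_lt_top (R : Type*) [Ring R]
    (hclique : ecliqueNum (unitGraph R) ≠ ⊤) (h2 : IsUnit (2 : R)) :
    ∃ n : ℕ, ∀ f : Fin n → R, (∀ i, f i ∈ ringJacobson R) → (List.ofFn f).prod = 0 := by
  obtain ⟨n, hn⟩ := Ideal.isNilpotent_of_finite_of_le_jacobson
    (finite_jacobson_of_ecliqueNum_ne_top hclique h2) le_rfl
  refine ⟨n, fun f hf => ?_⟩
  have hmem := Ideal.list_prod_ofFn_mem_pow fun i => mem_ringJacobson_iff.1 (hf i)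
  rwa [hn, Submodule.zero_eq_bot, Submodule.mem_bot] at hmem
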